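/- arXiv:2012.08947 — 2 statements merged into one kernel-verified Lean document; each statement's English description precedes it below -/
import Mathlib

section
/- Assume p_{1,1}=0. For every s∈ℂ with |s|=1, the polynomial equation K(ηs, ηs⁻¹)=0 in the variable η has exactly two solutions in the closed unit disk; one solution is identically 0, and the other, denoted η(s), is real and lies in [−1,1]. Moreover η(1)=1, η(−1)=−1, and |η(s)|<1 for all |s|=1 with s≠±1. -/
open Complex Filter Set Topology MeasureTheory

/-- A zero-drift symmetric random walk in the quadrant with small positive jumps,
encoding hypotheses (H1)-(H4) of the paper. -/
structure QuadrantWalk where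
  /-- the transition weights `p_{k,ℓ}`, finitely supported -/
  p : ℤ × ℤ →₀ ℝ
  nonneg : ∀ kl, 0 ≤ p kl
  sum_one : ∑ kl ∈ p.support, p kl = 1
  /-- (H1) symmetry -/
  symm : ∀ k l : ℤ, p (k, l) = p (l, k)
  /-- (H2) small positive jumps -/
  small : ∀ k l : ℤ, 2 ≤ k ∨ 2 ≤ l → p (k, l) = 0
  /-- (H3) irreducibility -/
  irred : ∀ x y : ℂ,
      ‖x‖ = 1 → ‖y‖ = 1 →
      ‖∑ kl ∈ p.support, (p kl : ℂ) * x ^ kl.1 * y ^ kl.2‖ = 1 →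
      x = 1 ∧ y = 1
  /-- (H4) zero drift, first coordinate -/
  drift1 : ∑ kl ∈ p.support, (kl.1 : ℝ) * p kl = 0
  /-- (H4) zero drift, second coordinate -/
  drift2 : ∑ kl ∈ p.support, (kl.2 : ℝ) * p kl = 0

/-- The kernel `K(x,y) = xy(1 - Σ p_{k,ℓ} x^{-k} y^{-ℓ})`, written as a polynomial in
`x, y` (by (H2), on the support `k ≤ 1` and `ℓ ≤ 1`, so the exponents `1-k, 1-ℓ` are
nonnegative). -/
noncomputable def QuadrantWalk.K (w : QuadrantWalk) (x y : ℂ) : ℂ :=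
  x * y - ∑ kl ∈ w.p.support, (w.p kl : ℂ) * x ^ (1 - kl.1).toNat * y ^ (1 - kl.2).toNat

/-!
With `p_{1,1} = 0` every jump has `k + ℓ ≤ 1`, so `K(zs, zs⁻¹) = z (z - Φ_s(z))` with
`Φ_s(z) = ∑ p_{k,ℓ} s^{ℓ-k} z^{1-k-ℓ}`, and the nonzero roots are the fixed points of `Φ_s`.
By (H1) `Φ_s` is real on `[-1, 1]` and maps it into itself, so it has a fixed point there.
By (H4) `∑ p_{k,ℓ} (1-k-ℓ) = 1`, so `Φ_s` is `1`-Lipschitz on the closed disc; by (H3) some jump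
has `1-k-ℓ ≥ 2`, and since `|z^n - z'^n| < n |z - z'|` for `n ≥ 2` (strict convexity of the disc)
the contraction is strict, so the fixed point is unique. Finally `η(s) = ±1` means
`∑ p_{k,ℓ} (±s⁻¹)^k (±s)^ℓ = 1`, which (H3) allows only for `s = ±1`.
-/

open Finset ComplexConjugate

section PowerDifferences

variable {R : Type*} [SeminormedRing R] [NormOneClass R] {z z' : R}

theorem norm_pow_succ_sub_pow_succ_le (hz : ‖z‖ ≤ 1) (hz' : ‖z'‖ ≤ 1) (n : ℕ) :
    ‖z ^ (n + 1) - z' ^ (n + 1)‖ ≤ ‖z ^ n - z' ^ n‖ + ‖z - z'‖ :=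
  calc ‖z ^ (n + 1) - z' ^ (n + 1)‖ = ‖z * (z ^ n - z' ^ n) + (z - z') * z' ^ n‖ := by
        rw [pow_succ', pow_succ']; noncomm_ring
    _ ≤ ‖z‖ * ‖z ^ n - z' ^ n‖ + ‖z - z'‖ * ‖z' ^ n‖ :=
        norm_add_le_of_le (norm_mul_le _ _) (norm_mul_le _ _)
    _ ≤ 1 * ‖z ^ n - z' ^ n‖ + ‖z - z'‖ * 1 := by
        gcongr
        exact (norm_pow_le z' n).trans (pow_le_one₀ (norm_nonneg _) hz')
    _ = ‖z ^ n - z' ^ n‖ + ‖z - z'‖ := by ring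

theorem norm_pow_sub_pow_le (hz : ‖z‖ ≤ 1) (hz' : ‖z'‖ ≤ 1) (n : ℕ) :
    ‖z ^ n - z' ^ n‖ ≤ n * ‖z - z'‖ := by
  induction n with
  | zero => simp
  | succ n ih =>
    calc ‖z ^ (n + 1) - z' ^ (n + 1)‖ ≤ ‖z ^ n - z' ^ n‖ + ‖z - z'‖ :=
          norm_pow_succ_sub_pow_succ_le hz hz' n
      _ ≤ (n + 1 : ℕ) * ‖z - z'‖ := by push_cast; linarith

theorem norm_sum_mul_pow_le_one {ι : Type*} {s : Finset ι} {c : ι → R} {d : ι → ℕ}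
    (hc : ∑ i ∈ s, ‖c i‖ ≤ 1) (hz : ‖z‖ ≤ 1) : ‖∑ i ∈ s, c i * z ^ d i‖ ≤ 1 :=
  calc ‖∑ i ∈ s, c i * z ^ d i‖ ≤ ∑ i ∈ s, ‖c i‖ :=
        norm_sum_le_of_le _ fun _ _ => (norm_mul_le _ _).trans <|
          mul_le_of_le_one_right (norm_nonneg _) ((norm_pow_le _ _).trans
            (pow_le_one₀ (norm_nonneg _) hz))
    _ ≤ 1 := hc

end PowerDifferences

section StrictConvex

variable {𝕜 : Type*} [NormedField 𝕜] [NormedSpace ℝ 𝕜] [StrictConvexSpace ℝ 𝕜] {z z' : 𝕜}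

theorem norm_add_lt_two_of_ne (hz : ‖z‖ ≤ 1) (hz' : ‖z'‖ ≤ 1) (hne : z ≠ z') :
    ‖z + z'‖ < 2 := by
  have h := norm_combo_lt_of_ne hz hz' hne (a := 1 / 2) (b := 1 / 2) (by norm_num) (by norm_num)
    (by norm_num)
  rw [← smul_add, norm_smul] at h
  norm_num at h
  linarith

theorem norm_pow_sub_pow_lt (hz : ‖z‖ ≤ 1) (hz' : ‖z'‖ ≤ 1) (hne : z ≠ z') {n : ℕ}
    (hn : 2 ≤ n) : ‖z ^ n - z' ^ n‖ < n * ‖z - z'‖ := by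
  induction n, hn using Nat.le_induction with
  | base =>
    have hd : 0 < ‖z - z'‖ := norm_pos_iff.2 (sub_ne_zero.2 hne)
    calc ‖z ^ 2 - z' ^ 2‖ = ‖z + z'‖ * ‖z - z'‖ := by rw [← norm_mul]; ring_nf
      _ < 2 * ‖z - z'‖ := by gcongr; exact norm_add_lt_two_of_ne hz hz' hne
      _ = (2 : ℕ) * ‖z - z'‖ := by norm_num
  | succ n _ ih =>
    calc ‖z ^ (n + 1) - z' ^ (n + 1)‖ ≤ ‖z ^ n - z' ^ n‖ + ‖z - z'‖ :=
          norm_pow_succ_sub_pow_succ_le hz hz' n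
      _ < (n + 1 : ℕ) * ‖z - z'‖ := by push_cast; linarith

variable {ι : Type*} {s : Finset ι} {c : ι → 𝕜} {d : ι → ℕ}

-- The map is `1`-Lipschitz on the disc, strictly so because of the monomial of degree `≥ 2`.
theorem eq_of_eq_sum_mul_pow (hc : ∑ i ∈ s, ‖c i‖ * d i ≤ 1)
    (hd : ∃ i ∈ s, c i ≠ 0 ∧ 2 ≤ d i) (hz : ‖z‖ ≤ 1) (hz' : ‖z'‖ ≤ 1)
    (h : z = ∑ i ∈ s, c i * z ^ d i) (h' : z' = ∑ i ∈ s, c i * z' ^ d i) : z = z' := by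
  by_contra hne
  obtain ⟨j, hj, hcj, hdj⟩ := hd
  have hdiff : z - z' = ∑ i ∈ s, c i * (z ^ d i - z' ^ d i) := by
    simp only [mul_sub, sum_sub_distrib, ← h, ← h']
  have : ‖z - z'‖ < ‖z - z'‖ :=
    calc ‖z - z'‖ ≤ ∑ i ∈ s, ‖c i‖ * ‖z ^ d i - z' ^ d i‖ := by
          rw [hdiff]; exact norm_sum_le_of_le _ fun i _ => (norm_mul _ _).le
      _ < ∑ i ∈ s, ‖c i‖ * (d i * ‖z - z'‖) :=
          sum_lt_sum (fun i _ => by gcongr; exact norm_pow_sub_pow_le hz hz' _)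
            ⟨j, hj, by gcongr; exact norm_pow_sub_pow_lt hz hz' hne hdj⟩
      _ = (∑ i ∈ s, ‖c i‖ * d i) * ‖z - z'‖ := by
          rw [sum_mul]; exact sum_congr rfl fun i _ => by ring
      _ ≤ ‖z - z'‖ := mul_le_of_le_one_left (norm_nonneg _) hc
  exact lt_irrefl _ this

end StrictConvex

namespace QuadrantWalk

variable {w : QuadrantWalk}

def diagExponent (kl : ℤ × ℤ) : ℕ := (1 - kl.1 - kl.2).toNat

/-- When `p_{1,1} = 0`, the kernel factors as `K(zs, zs⁻¹) = z (z - Φ s z)` (`K_mul_mul_inv`). -/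
noncomputable def Φ (w : QuadrantWalk) (s z : ℂ) : ℂ :=
  ∑ kl ∈ w.p.support, (w.p kl * s ^ (kl.2 - kl.1)) * z ^ diagExponent kl

noncomputable def jumpSum (w : QuadrantWalk) (x y : ℂ) : ℂ :=
  ∑ kl ∈ w.p.support, (w.p kl : ℂ) * x ^ kl.1 * y ^ kl.2

theorem support_bounds (h11 : w.p (1, 1) = 0) {kl : ℤ × ℤ} (h : kl ∈ w.p.support) :
    kl.1 ≤ 1 ∧ kl.2 ≤ 1 ∧ kl.1 + kl.2 ≤ 1 := by
  obtain ⟨k, l⟩ := kl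
  have hne : w.p (k, l) ≠ 0 := Finsupp.mem_support_iff.1 h
  have hk : k ≤ 1 := by by_contra hk; exact hne (w.small k l (Or.inl (by omega)))
  have hl : l ≤ 1 := by by_contra hl; exact hne (w.small k l (Or.inr (by omega)))
  refine ⟨hk, hl, ?_⟩
  by_contra hkl
  obtain rfl : k = 1 := by omega
  obtain rfl : l = 1 := by omega
  exact hne h11

theorem diagExponent_cast (h11 : w.p (1, 1) = 0) {kl : ℤ × ℤ} (h : kl ∈ w.p.support) :
    (diagExponent kl : ℤ) = 1 - kl.1 - kl.2 := by
  have := support_bounds h11 h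
  unfold diagExponent; omega

theorem K_mul_mul_inv (h11 : w.p (1, 1) = 0) {s : ℂ} (hs : s ≠ 0) (z : ℂ) :
    w.K (z * s) (z * s⁻¹) = z * (z - w.Φ s z) := by
  unfold K Φ
  rw [mul_sub, mul_sum]
  congr 1
  · field_simp
  refine sum_congr rfl fun kl hkl => ?_
  obtain ⟨hk, hl, hkl⟩ := support_bounds h11 hkl
  have hz : z ^ (1 - kl.1).toNat * z ^ (1 - kl.2).toNat = z * z ^ diagExponent kl := by
    rw [← pow_succ', ← pow_add]; congr 1; unfold diagExponent; omega
  have hs : s ^ (1 - kl.1).toNat * s⁻¹ ^ (1 - kl.2).toNat = s ^ (kl.2 - kl.1) := by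
    rw [inv_pow, ← zpow_natCast, ← zpow_natCast, ← zpow_neg, ← zpow_add₀ hs]
    congr 1; omega
  calc (w.p kl : ℂ) * (z * s) ^ (1 - kl.1).toNat * (z * s⁻¹) ^ (1 - kl.2).toNat
      = w.p kl * (z ^ (1 - kl.1).toNat * z ^ (1 - kl.2).toNat) *
          (s ^ (1 - kl.1).toNat * s⁻¹ ^ (1 - kl.2).toNat) := by ring
    _ = z * (w.p kl * s ^ (kl.2 - kl.1) * z ^ diagExponent kl) := by rw [hz, hs]; ring

theorem norm_p_mul_zpow {s : ℂ} (hs : ‖s‖ = 1) (kl : ℤ × ℤ) (j : ℤ) :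
    ‖(w.p kl : ℂ) * s ^ j‖ = w.p kl := by
  rw [norm_mul, norm_zpow, hs, one_zpow, mul_one, norm_real, Real.norm_of_nonneg (w.nonneg kl)]

theorem sum_diagExponent_mul (h11 : w.p (1, 1) = 0) :
    ∑ kl ∈ w.p.support, w.p kl * diagExponent kl = 1 := by
  have : ∀ kl ∈ w.p.support,
      w.p kl * diagExponent kl = w.p kl - kl.1 * w.p kl - kl.2 * w.p kl := fun kl hkl => by
    have h : ((diagExponent kl : ℤ) : ℝ) = ((1 - kl.1 - kl.2 : ℤ) : ℝ) :=
      congrArg _ (diagExponent_cast h11 hkl)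
    push_cast at h
    rw [h]; ring
  rw [sum_congr rfl this, sum_sub_distrib, sum_sub_distrib, w.sum_one, w.drift1, w.drift2]
  norm_num

theorem jumpSum_one_one : w.jumpSum 1 1 = 1 := by
  simp [jumpSum, ← ofReal_sum, w.sum_one]

theorem Φ_one {s : ℂ} (hs : s ≠ 0) : w.Φ s 1 = w.jumpSum s⁻¹ s := by
  refine sum_congr rfl fun kl _ => ?_
  rw [one_pow, mul_one, mul_assoc, inv_zpow', ← zpow_add₀ hs]
  ring_nf

theorem Φ_neg_one (h11 : w.p (1, 1) = 0) {s : ℂ} (hs : s ≠ 0) :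
    w.Φ s (-1) = -w.jumpSum (-s⁻¹) (-s) := by
  rw [jumpSum, ← sum_neg_distrib]
  refine sum_congr rfl fun kl hkl => ?_
  have hm1 : (-1 : ℂ) ≠ 0 := by norm_num
  have hsign (j : ℤ) : (-1 : ℂ) ^ (-j) = (-1) ^ j := by rw [zpow_neg, ← inv_zpow, inv_neg, inv_one]
  rw [← zpow_natCast, diagExponent_cast h11 hkl, neg_eq_neg_one_mul s⁻¹, neg_eq_neg_one_mul s,
    mul_zpow, mul_zpow, inv_zpow', show 1 - kl.1 - kl.2 = 1 + -kl.1 + -kl.2 by ring,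
    zpow_add₀ hm1, zpow_add₀ hm1, hsign, hsign, show kl.2 - kl.1 = -kl.1 + kl.2 by ring,
    zpow_add₀ hs]
  ring

theorem eq_one_of_jumpSum_eq_one {x y : ℂ} (hx : ‖x‖ = 1) (hy : ‖y‖ = 1)
    (h : w.jumpSum x y = 1) : x = 1 ∧ y = 1 :=
  w.irred x y hx hy ((congrArg norm h).trans norm_one)

theorem Φ_one_one : w.Φ 1 1 = 1 := by
  rw [Φ_one one_ne_zero, inv_one, jumpSum_one_one]

theorem Φ_neg_one_neg_one (h11 : w.p (1, 1) = 0) : w.Φ (-1) (-1) = -1 := by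
  rw [Φ_neg_one h11 (by norm_num)]
  norm_num [jumpSum_one_one]

theorem exists_two_le_diagExponent (h11 : w.p (1, 1) = 0) :
    ∃ kl ∈ w.p.support, 2 ≤ diagExponent kl := by
  by_contra! hlt
  -- Otherwise `Φ 1 (-1) = ∑ p_{k,ℓ} (1 - 2 (1-k-ℓ)) = -1`, and then `(-1, -1)` violates (H3).
  have hΦ : w.Φ 1 (-1) = -1 := by
    have hterm : ∀ kl ∈ w.p.support, (w.p kl * (1 : ℂ) ^ (kl.2 - kl.1)) * (-1) ^ diagExponent kl =
        ((w.p kl - 2 * (w.p kl * diagExponent kl) : ℝ) : ℂ) := fun kl hkl => by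
      have := hlt kl hkl
      rw [one_zpow, mul_one]
      interval_cases diagExponent kl <;> push_cast <;> ring
    rw [Φ, sum_congr rfl hterm, ← ofReal_sum, sum_sub_distrib, ← mul_sum, w.sum_one,
      sum_diagExponent_mul h11]
    norm_num
  rw [Φ_neg_one h11 one_ne_zero, neg_inj] at hΦ
  have := (eq_one_of_jumpSum_eq_one (by simp) (by simp) hΦ).1
  norm_num at this

theorem conj_Φ_ofReal {s : ℂ} (hs : ‖s‖ = 1) (t : ℝ) : conj (w.Φ s t) = w.Φ s t := by
  have hswap (kl : ℤ × ℤ) : w.p kl.swap = w.p kl := w.symm kl.2 kl.1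
  have hmem (kl : ℤ × ℤ) (h : kl ∈ w.p.support) : kl.swap ∈ w.p.support := by
    rwa [Finsupp.mem_support_iff, hswap, ← Finsupp.mem_support_iff]
  rw [Φ, map_sum]
  refine sum_nbij' Prod.swap Prod.swap hmem hmem (fun kl _ => kl.swap_swap)
    (fun kl _ => kl.swap_swap) fun kl _ => ?_
  have hA : diagExponent kl.swap = diagExponent kl := by
    simp only [diagExponent, Prod.fst_swap, Prod.snd_swap]; omega
  rw [map_mul, map_mul, map_zpow₀, ← inv_eq_conj hs, map_pow, conj_ofReal, conj_ofReal, hswap, hA,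
    inv_zpow', Prod.fst_swap, Prod.snd_swap, neg_sub]

theorem norm_Φ_le_one {s z : ℂ} (hs : ‖s‖ = 1) (hz : ‖z‖ ≤ 1) : ‖w.Φ s z‖ ≤ 1 :=
  norm_sum_mul_pow_le_one (by simp only [norm_p_mul_zpow hs, w.sum_one, le_refl]) hz

theorem exists_real_eq_Φ {s : ℂ} (hs : ‖s‖ = 1) :
    ∃ t ∈ Icc (-1 : ℝ) 1, (t : ℂ) = w.Φ s t := by
  have hmaps : MapsTo (fun t : ℝ => (w.Φ s t).re) (Icc (-1) 1) (Icc (-1) 1) := fun t ht =>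
    abs_le.1 <| (abs_re_le_norm _).trans <|
      norm_Φ_le_one hs (by rwa [norm_real, Real.norm_eq_abs, abs_le])
  have hcont : Continuous fun t : ℝ => (w.Φ s t).re := by unfold Φ; fun_prop
  obtain ⟨t, ht, hfix⟩ :=
    exists_mem_Icc_isFixedPt_of_mapsTo hcont.continuousOn (by norm_num) hmaps
  refine ⟨t, ht, Complex.ext ?_ ?_⟩
  · exact hfix.symm
  · rw [ofReal_im, conj_eq_iff_im.1 (conj_Φ_ofReal hs t)]

theorem eq_of_eq_Φ (h11 : w.p (1, 1) = 0) {s z z' : ℂ} (hs : ‖s‖ = 1) (hz : ‖z‖ ≤ 1)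
    (hz' : ‖z'‖ ≤ 1) (h : z = w.Φ s z) (h' : z' = w.Φ s z') : z = z' := by
  obtain ⟨kl, hkl, hA⟩ := exists_two_le_diagExponent h11
  refine eq_of_eq_sum_mul_pow ?_ ⟨kl, hkl, ?_, hA⟩ hz hz' h h'
  · simp only [norm_p_mul_zpow hs, sum_diagExponent_mul h11, le_refl]
  · exact mul_ne_zero (ofReal_ne_zero.2 (Finsupp.mem_support_iff.1 hkl))
      (zpow_ne_zero _ (ne_zero_of_norm_ne_zero (by simp [hs])))

theorem eq_one_of_Φ_one {s : ℂ} (hs : ‖s‖ = 1) (h : w.Φ s 1 = 1) : s = 1 := by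
  rw [Φ_one (ne_zero_of_norm_ne_zero (by simp [hs]))] at h
  exact (eq_one_of_jumpSum_eq_one (by rw [norm_inv, hs, inv_one]) hs h).2

theorem eq_neg_one_of_Φ_neg_one (h11 : w.p (1, 1) = 0) {s : ℂ} (hs : ‖s‖ = 1)
    (h : w.Φ s (-1) = -1) : s = -1 := by
  rw [Φ_neg_one h11 (ne_zero_of_norm_ne_zero (by simp [hs])), neg_inj] at h
  have := (eq_one_of_jumpSum_eq_one (by rw [norm_neg, norm_inv, hs, inv_one])
    (by rw [norm_neg, hs]) h).2
  rwa [neg_eq_iff_eq_neg] at this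

end QuadrantWalk

/-- case `p_{1,1} = 0`. For every `s` on the unit circle, the set of
solutions `η` in the closed unit disk of `K(ηs, ηs⁻¹) = 0` is exactly `{0, η(s)}`
("exactly two solutions, one identically zero"), where `η(s)` is real and lies in
`[-1,1]`; moreover `η(1) = 1`, `η(-1) = -1`, and `|η(s)| < 1` for `s ≠ ±1`. -/
theorem statement0 (w : QuadrantWalk) (h11 : w.p (1, 1) = 0) :
    ∃ η : ℂ → ℝ,
      (∀ s : ℂ, ‖s‖ = 1 →
        η s ∈ Set.Icc (-1 : ℝ) 1 ∧
        (∀ z : ℂ, ‖z‖ ≤ 1 →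
          (w.K (z * s) (z * s⁻¹) = 0 ↔ z = 0 ∨ z = (η s : ℂ)))) ∧
      η 1 = 1 ∧ η (-1) = -1 ∧
      (∀ s : ℂ, ‖s‖ = 1 → s ≠ 1 → s ≠ -1 → |η s| < 1) := by
  have hroot (s : ℂ) : ∃ t : ℝ, ‖s‖ = 1 → t ∈ Icc (-1 : ℝ) 1 ∧ (t : ℂ) = w.Φ s t := by
    by_cases hs : ‖s‖ = 1
    · obtain ⟨t, ht, hfix⟩ := w.exists_real_eq_Φ hs
      exact ⟨t, fun _ => ⟨ht, hfix⟩⟩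
    · exact ⟨0, fun h => absurd h hs⟩
  choose η hη using hroot
  have habs {s : ℂ} (hs : ‖s‖ = 1) : |η s| ≤ 1 := abs_le.2 (hη s hs).1
  have huniq {s z : ℂ} (hs : ‖s‖ = 1) (hz : ‖z‖ ≤ 1) (h : z = w.Φ s z) : z = η s :=
    QuadrantWalk.eq_of_eq_Φ h11 hs hz (by rw [norm_real, Real.norm_eq_abs]; exact habs hs) h
      (hη s hs).2
  refine ⟨η, fun s hs => ⟨(hη s hs).1, fun z hz => ?_⟩, ?_, ?_, fun s hs h1 hm1 => ?_⟩
  · rw [QuadrantWalk.K_mul_mul_inv h11 (ne_zero_of_norm_ne_zero (by simp [hs])), mul_eq_zero,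
      sub_eq_zero]
    refine or_congr_right ⟨huniq hs hz, ?_⟩
    rintro rfl
    exact (hη s hs).2
  · exact_mod_cast (huniq norm_one norm_one.le QuadrantWalk.Φ_one_one.symm).symm
  · have h := huniq (by simp) (by simp) (QuadrantWalk.Φ_neg_one_neg_one h11).symm
    exact_mod_cast h.symm
  · refine (habs hs).lt_of_ne fun hη1 => ?_
    have hfix := (hη s hs).2
    rcases eq_or_eq_neg_of_abs_eq hη1 with h | h <;> rw [h] at hfix <;> push_cast at hfix
    · exact h1 (QuadrantWalk.eq_one_of_Φ_one hs hfix.symm)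
    · exact hm1 (QuadrantWalk.eq_neg_one_of_Φ_neg_one h11 hs hfix.symm)
end

section
/- Assume p_{1,1}=0. Then 0∈S₁, and for all |s|=1 one has η(−s̄)=−η(s) (bar denoting complex conjugation). Moreover each of the maps s↦η(s)s and s↦η(s)s⁻¹ is exactly two-to-one from the unit circle onto S₁ and S₂ respectively. -/
/-!
The roots of `z ↦ K(zs, zs⁻¹)` are invariant under `(s, z) ↦ (-s, -z)` and, since `K` has real
coefficients and is symmetric by (H1), under `s ↦ s̄ = s⁻¹`; hence `η(-s̄) = -η(s)`. A nonzero
`x ∈ S₁` with partner `y` is `x = zs`, `y = zs⁻¹` for `s² = x / y`, which forces `z = η(s)`, and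
the only other preimage of `x` is `-s`. The fibre over `0` is `{±i}`: `η(±i) = 0` by the two
symmetries, while for `Re s ≠ 0`, `s ≠ ±1`, the polynomial `G(t) = K(ts, ts⁻¹) / t` (a polynomial
because `p₁₁ = 0`) is real for real `t`, equals `-2 p₀₁ Re s` at `t = 0`, where `p₀₁ > 0` by (H3)
and (H4), and has signs `±` at `t = ±1` by (H3); so it has a nonzero root in `(-1, 1)`, which must
be `η(s)`.
-/

open Complex Filter Set Topology MeasureTheory

/-- The set `𝒦 = {(x,y) : K(x,y) = 0, |x| = |y| ≤ 1}`. -/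
def QuadrantWalk.kerSet (w : QuadrantWalk) : Set (ℂ × ℂ) :=
  {q | w.K q.1 q.2 = 0 ∧ ‖q.1‖ = ‖q.2‖ ∧ ‖q.1‖ ≤ 1}

/-- The curve `S₁`, the projection of `𝒦` along the first coordinate. -/
def QuadrantWalk.S1 (w : QuadrantWalk) : Set ℂ :=
  {x | ∃ y : ℂ, (x, y) ∈ w.kerSet}

/-- The curve `S₂`, the projection of `𝒦` along the second coordinate. -/
def QuadrantWalk.S2 (w : QuadrantWalk) : Set ℂ :=
  {y | ∃ x : ℂ, (x, y) ∈ w.kerSet}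

open ComplexConjugate

lemma Complex.eq_I_or_eq_neg_I_of_re_eq_zero {s : ℂ} (hs : ‖s‖ = 1) (hre : s.re = 0) :
    s = I ∨ s = -I := by
  have him : s.im * s.im = 1 := by
    have := Complex.normSq_eq_norm_sq s
    rw [hs, Complex.normSq_apply, hre] at this
    linarith
  rcases mul_self_eq_one_iff.mp him with h | h
  · exact .inl (Complex.ext (by simp [hre]) (by simp [h]))
  · exact .inr (Complex.ext (by simp [hre]) (by simp [h]))

namespace QuadrantWalk

variable (w : QuadrantWalk)

lemma p_swap (kl : ℤ × ℤ) : w.p kl.swap = w.p kl := w.symm kl.2 kl.1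

lemma le_one_of_mem_support {kl : ℤ × ℤ} (h : kl ∈ w.p.support) : kl.1 ≤ 1 ∧ kl.2 ≤ 1 := by
  have hp := Finsupp.mem_support_iff.mp h
  by_contra! hkl
  exact hp (w.small kl.1 kl.2 (by omega))

lemma not_one_one_of_mem_support (h11 : w.p (1, 1) = 0) {kl : ℤ × ℤ} (h : kl ∈ w.p.support) :
    ¬(kl.1 = 1 ∧ kl.2 = 1) :=
  fun ⟨h1, h2⟩ => Finsupp.mem_support_iff.mp h (by rw [show kl = (1, 1) from Prod.ext h1 h2, h11])

lemma K_comm (x y : ℂ) : w.K x y = w.K y x := by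
  unfold K
  rw [mul_comm x y]
  congr 1
  refine Finset.sum_equiv (Equiv.prodComm ℤ ℤ) (fun kl => ?_) (fun kl _ => ?_)
  · simp [p_swap]
  · simp only [Equiv.prodComm_apply, Prod.fst_swap, Prod.snd_swap, p_swap]
    ring

lemma conj_K (x y : ℂ) : conj (w.K x y) = w.K (conj x) (conj y) := by
  simp [K, map_sum]

lemma K_eq_mul_one_sub {x y : ℂ} (hx : x ≠ 0) (hy : y ≠ 0) :
    w.K x y = x * y * (1 - ∑ kl ∈ w.p.support, (w.p kl : ℂ) * x ^ (-kl.1) * y ^ (-kl.2)) := by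
  rw [K, mul_sub, mul_one, Finset.mul_sum]
  congr 1
  refine Finset.sum_congr rfl fun kl hkl => ?_
  obtain ⟨hk, hl⟩ := w.le_one_of_mem_support hkl
  rw [← zpow_natCast, ← zpow_natCast, Int.toNat_of_nonneg (by omega),
    Int.toNat_of_nonneg (by omega), zpow_sub₀ hx, zpow_sub₀ hy, zpow_neg, zpow_neg]
  simp only [zpow_one, div_eq_mul_inv]
  ring

lemma norm_sum_le_one {x y : ℂ} (hx : ‖x‖ = 1) (hy : ‖y‖ = 1) :
    ‖∑ kl ∈ w.p.support, (w.p kl : ℂ) * x ^ kl.1 * y ^ kl.2‖ ≤ 1 :=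
  calc ‖∑ kl ∈ w.p.support, (w.p kl : ℂ) * x ^ kl.1 * y ^ kl.2‖
      ≤ ∑ kl ∈ w.p.support, ‖(w.p kl : ℂ) * x ^ kl.1 * y ^ kl.2‖ := norm_sum_le _ _
    _ = ∑ kl ∈ w.p.support, w.p kl := by
        refine Finset.sum_congr rfl fun kl _ => ?_
        simp [hx, hy, abs_of_nonneg (w.nonneg kl)]
    _ = 1 := w.sum_one

lemma K_one_one : w.K 1 1 = 0 := by
  simp [K, ← Complex.ofReal_sum, w.sum_one]

lemma re_K_pos {s : ℂ} (hs : ‖s‖ = 1) (hs1 : s ≠ 1) : 0 < (w.K s s⁻¹).re := by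
  have hs0 : s ≠ 0 := ne_zero_of_norm_ne_zero (by simp [hs])
  have hsinv : ‖s⁻¹‖ = 1 := by rw [norm_inv, hs, inv_one]
  set A := ∑ kl ∈ w.p.support, (w.p kl : ℂ) * s⁻¹ ^ kl.1 * s ^ kl.2
  have hA : ‖A‖ < 1 := (w.norm_sum_le_one hsinv hs).lt_of_ne
    fun h => hs1 (w.irred _ _ hsinv hs h).2
  have hK : w.K s s⁻¹ = 1 - A := by
    rw [w.K_eq_mul_one_sub hs0 (inv_ne_zero hs0), mul_inv_cancel₀ hs0, one_mul]
    simp [A, zpow_neg]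
  rw [hK, Complex.sub_re, Complex.one_re, sub_pos]
  exact (Complex.re_le_norm A).trans_lt hA

lemma p_zero_one_pos (h11 : w.p (1, 1) = 0) : 0 < w.p (0, 1) := by
  refine (w.nonneg _).lt_of_ne' fun h01 => ?_
  have h10 : w.p (1, 0) = 0 := by rw [← h01, ← w.p_swap]; rfl
  have hle : ∀ kl ∈ w.p.support, kl.1 + kl.2 ≤ 0 := by
    rintro ⟨k, l⟩ hkl
    obtain ⟨hk, hl⟩ := w.le_one_of_mem_support hkl
    have hp := Finsupp.mem_support_iff.mp hkl
    by_contra! h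
    obtain ⟨rfl, rfl⟩ | ⟨rfl, rfl⟩ | ⟨rfl, rfl⟩ :
        (k = 1 ∧ l = 1) ∨ (k = 0 ∧ l = 1) ∨ (k = 1 ∧ l = 0) := by omega
    all_goals contradiction
  have hdrift : ∑ kl ∈ w.p.support, (-(kl.1 + kl.2 : ℝ)) * w.p kl = 0 := by
    simp only [neg_mul, add_mul, Finset.sum_neg_distrib, Finset.sum_add_distrib, w.drift1,
      w.drift2, add_zero, neg_zero]
  have hsum_zero : ∀ kl ∈ w.p.support, kl.1 + kl.2 = 0 := by
    intro kl hkl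
    have hterm := (Finset.sum_eq_zero_iff_of_nonneg fun kl hkl => mul_nonneg
      (by have := hle kl hkl; rify at this; linarith) (w.nonneg kl)).mp hdrift kl hkl
    have hp := Finsupp.mem_support_iff.mp hkl
    have : (kl.1 + kl.2 : ℝ) = 0 := by simp [hp] at hterm; linarith
    exact_mod_cast this
  -- the walk then never leaves the sublattice `k + l = 0`, so (H3) fails at `x = y = -1`
  have hparity : ∑ kl ∈ w.p.support, (w.p kl : ℂ) * (-1) ^ kl.1 * (-1) ^ kl.2 = 1 := by
    calc _ = ∑ kl ∈ w.p.support, (w.p kl : ℂ) := Finset.sum_congr rfl fun kl hkl => by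
          rw [mul_assoc, ← zpow_add₀ (by norm_num), hsum_zero kl hkl, zpow_zero, mul_one]
      _ = 1 := by exact_mod_cast w.sum_one
  have := (w.irred (-1) (-1) (by simp) (by simp) (by simp [hparity])).1
  norm_num at this

/-- `K(ts, ts⁻¹) / t`, a polynomial in `t` when `p₁₁ = 0`. -/
noncomputable def reducedKernel (s t : ℂ) : ℂ :=
  t - ∑ kl ∈ w.p.support, (w.p kl : ℂ) * t ^ (1 - kl.1 - kl.2).toNat * s ^ (kl.2 - kl.1)

lemma K_mul_eq_mul_reducedKernel (h11 : w.p (1, 1) = 0) {s : ℂ} (hs : s ≠ 0) (t : ℂ) :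
    w.K (t * s) (t * s⁻¹) = t * w.reducedKernel s t := by
  rw [K, reducedKernel, mul_sub, Finset.mul_sum]
  congr 1
  · field_simp
  refine Finset.sum_congr rfl fun kl hkl => ?_
  obtain ⟨hk, hl⟩ := w.le_one_of_mem_support hkl
  have hkl11 := w.not_one_one_of_mem_support h11 hkl
  have hexp : (1 - kl.1).toNat + (1 - kl.2).toNat = (1 - kl.1 - kl.2).toNat + 1 := by omega
  have hspow : s ^ (1 - kl.1).toNat * s⁻¹ ^ (1 - kl.2).toNat = s ^ (kl.2 - kl.1) := by
    rw [inv_pow, ← zpow_natCast, ← zpow_natCast, ← div_eq_mul_inv, ← zpow_sub₀ hs]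
    congr 1
    omega
  calc (w.p kl : ℂ) * (t * s) ^ (1 - kl.1).toNat * (t * s⁻¹) ^ (1 - kl.2).toNat
      = w.p kl * t ^ ((1 - kl.1).toNat + (1 - kl.2).toNat) *
          (s ^ (1 - kl.1).toNat * s⁻¹ ^ (1 - kl.2).toNat) := by ring
    _ = t * (w.p kl * t ^ (1 - kl.1 - kl.2).toNat * s ^ (kl.2 - kl.1)) := by
      rw [hexp, hspow]; ring

lemma re_reducedKernel_zero (h11 : w.p (1, 1) = 0) {s : ℂ} (hs : ‖s‖ = 1) :
    (w.reducedKernel s 0).re = -(2 * w.p (0, 1) * s.re) := by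
  have hsum : ∑ kl ∈ w.p.support, (w.p kl : ℂ) * (0 : ℂ) ^ (1 - kl.1 - kl.2).toNat *
      s ^ (kl.2 - kl.1) = w.p (0, 1) * s⁻¹ + w.p (0, 1) * s := by
    rw [Finset.sum_eq_add (1, 0) (0, 1) (by decide)]
    · simp [← w.p_swap (1, 0)]
    · rintro kl hkl ⟨h10, h01⟩
      obtain ⟨hk, hl⟩ := w.le_one_of_mem_support hkl
      have hkl11 := w.not_one_one_of_mem_support h11 hkl
      have hpos : (1 - kl.1 - kl.2).toNat ≠ 0 := by
        rcases kl with ⟨k, l⟩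
        simp only [ne_eq, Prod.mk.injEq] at h10 h01
        omega
      simp [hpos]
    all_goals intro h; simp [Finsupp.notMem_support_iff.mp h]
  rw [reducedKernel, hsum, Complex.inv_eq_conj hs]
  simp only [zero_sub, neg_add_rev, add_re, neg_re, mul_re, ofReal_re, ofReal_im, zero_mul,
    sub_zero, conj_re, conj_im, mul_neg, neg_zero]
  ring

lemma conj_K_mul (s : ℂ) (hs : ‖s‖ = 1) (t : ℝ) :
    conj (w.K (t * s) (t * s⁻¹)) = w.K (t * s) (t * s⁻¹) := by
  rw [conj_K, map_mul, map_mul, Complex.conj_ofReal, map_inv₀, ← Complex.inv_eq_conj hs,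
    inv_inv, K_comm]

lemma continuous_reducedKernel (s : ℂ) : Continuous (w.reducedKernel s) := by
  unfold reducedKernel
  fun_prop

lemma exists_real_root (h11 : w.p (1, 1) = 0) {s : ℂ} (hs : ‖s‖ = 1) (hre : s.re ≠ 0)
    (hs1 : s ≠ 1) (hs1' : s ≠ -1) :
    ∃ t : ℝ, t ∈ Ioo (-1) 1 ∧ t ≠ 0 ∧ w.K (t * s) (t * s⁻¹) = 0 := by
  have hs0 : s ≠ 0 := ne_zero_of_norm_ne_zero (by simp [hs])
  have hK (t : ℝ) := w.K_mul_eq_mul_reducedKernel h11 hs0 t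
  set g : ℝ → ℝ := fun t => (w.reducedKernel s t).re
  have hg : Continuous g :=
    Complex.continuous_re.comp ((w.continuous_reducedKernel s).comp Complex.continuous_ofReal)
  have hg1 : 0 < g 1 := by
    have h := hK 1
    simp only [Complex.ofReal_one, one_mul] at h
    simpa [g, h] using w.re_K_pos hs hs1
  have hgm1 : g (-1) < 0 := by
    have := w.re_K_pos (s := -s) (by rwa [norm_neg]) (fun h => hs1' (neg_eq_iff_eq_neg.mp h))
    have h := hK (-1)
    simp only [Complex.ofReal_neg, Complex.ofReal_one, neg_one_mul] at h
    simpa [h, g] using this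
  have hg0 : g 0 = -(2 * w.p (0, 1) * s.re) := by
    simpa [g] using w.re_reducedKernel_zero h11 hs
  have hp01 := w.p_zero_one_pos h11
  obtain ⟨t, ht, ht0, hgt⟩ : ∃ t ∈ Ioo (-1 : ℝ) 1, t ≠ 0 ∧ g t = 0 := by
    rcases hre.lt_or_gt with hneg | hpos
    · obtain ⟨t, ⟨ht1, ht2⟩, hgt⟩ := intermediate_value_Ioo (by norm_num : (-1 : ℝ) ≤ 0)
        hg.continuousOn ⟨hgm1, by rw [hg0]; nlinarith⟩
      exact ⟨t, ⟨ht1, by linarith⟩, ht2.ne, hgt⟩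
    · obtain ⟨t, ⟨ht1, ht2⟩, hgt⟩ := intermediate_value_Ioo (by norm_num : (0 : ℝ) ≤ 1)
        hg.continuousOn ⟨by rw [hg0]; nlinarith, hg1⟩
      exact ⟨t, ⟨by linarith, ht2⟩, ht1.ne', hgt⟩
  -- `t · reducedKernel s t = K(ts, ts⁻¹)` is real, so the real zero of `g` is a zero
  have him : (w.reducedKernel s t).im = 0 := by
    have := Complex.conj_eq_iff_im.mp (w.conj_K_mul s hs t)
    rw [hK, Complex.mul_im, Complex.ofReal_re, Complex.ofReal_im, zero_mul, add_zero] at this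
    exact (mul_eq_zero.mp this).resolve_left ht0
  refine ⟨t, ht, ht0, ?_⟩
  have hzero : w.reducedKernel s t = 0 := Complex.ext (by simpa using hgt) (by simpa using him)
  rw [hK, hzero, mul_zero]

def IsDistinguishedRoot (η : ℂ → ℝ) : Prop :=
  ∀ s : ℂ, ‖s‖ = 1 →
    η s ∈ Icc (-1 : ℝ) 1 ∧ ∀ z : ℂ, ‖z‖ ≤ 1 → (w.K (z * s) (z * s⁻¹) = 0 ↔ z = 0 ∨ z = η s)

lemma S2_subset_S1 : w.S2 ⊆ w.S1 := by
  rintro y ⟨x, hK, hxy, hx⟩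
  exact ⟨x, by rwa [K_comm], hxy.symm, hxy ▸ hx⟩

variable {w} {η : ℂ → ℝ} (hη : w.IsDistinguishedRoot η)
include hη

namespace IsDistinguishedRoot

lemma norm_eta_le_one {s : ℂ} (hs : ‖s‖ = 1) : ‖(η s : ℂ)‖ ≤ 1 := by
  rw [Complex.norm_real, Real.norm_eq_abs, abs_le]
  exact (hη s hs).1

lemma K_eta_eq_zero {s : ℂ} (hs : ‖s‖ = 1) : w.K (η s * s) (η s * s⁻¹) = 0 :=
  ((hη s hs).2 _ (hη.norm_eta_le_one hs)).mpr (.inr rfl)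

lemma eq_eta_of_K_eq_zero {s z : ℂ} (hs : ‖s‖ = 1) (hz : ‖z‖ ≤ 1) (hz0 : z ≠ 0)
    (hK : w.K (z * s) (z * s⁻¹) = 0) : z = η s :=
  (((hη s hs).2 z hz).mp hK).resolve_left hz0

lemma eta_mul_mem_S1 {s : ℂ} (hs : ‖s‖ = 1) : (η s : ℂ) * s ∈ w.S1 :=
  ⟨_, hη.K_eta_eq_zero hs, by simp [hs], by simpa [hs] using hη.norm_eta_le_one hs⟩

lemma eta_mul_inv_mem_S2 {s : ℂ} (hs : ‖s‖ = 1) : (η s : ℂ) * s⁻¹ ∈ w.S2 :=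
  ⟨_, hη.K_eta_eq_zero hs, by simp [hs], by simpa [hs] using hη.norm_eta_le_one hs⟩

lemma eta_comp_eq_mul {f : ℂ → ℂ} (hf : ∀ u, ‖u‖ = 1 → ‖f u‖ = 1) (hff : ∀ u, f (f u) = u)
    {ε : ℝ} (hε : |ε| = 1)
    (hroot : ∀ u, ‖u‖ = 1 → w.K (ε * η u * f u) (ε * η u * (f u)⁻¹) = 0)
    {s : ℂ} (hs : ‖s‖ = 1) : η (f s) = ε * η s := by
  have hε0 : ε ≠ 0 := by rintro rfl; simp at hε
  have key : ∀ u, ‖u‖ = 1 → η u ≠ 0 → η (f u) = ε * η u := fun u hu hu0 => by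
    have h := hη.eq_eta_of_K_eq_zero (hf u hu) (z := ε * η u)
      (by simpa [hε] using hη.norm_eta_le_one hu) (by exact_mod_cast mul_ne_zero hε0 hu0)
      (hroot u hu)
    exact_mod_cast h.symm
  by_cases hs0 : η s = 0
  · by_contra hne
    rw [hs0, mul_zero] at hne
    have := key (f s) (hf s hs) hne
    rw [hff, hs0] at this
    exact hne (by simpa [hε0] using this.symm)
  · exact key s hs hs0

lemma eta_neg {s : ℂ} (hs : ‖s‖ = 1) : η (-s) = -η s := by
  simpa using hη.eta_comp_eq_mul (f := Neg.neg) (ε := -1) (by simp) neg_neg (by simp)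
    (fun u hu => by simpa using hη.K_eta_eq_zero hu) hs

lemma eta_conj {s : ℂ} (hs : ‖s‖ = 1) : η (conj s) = η s := by
  simpa using hη.eta_comp_eq_mul (f := conj) (ε := 1) (by simp) Complex.conj_conj (by simp)
    (fun u hu => by simpa [conj_K, ← map_inv₀] using congrArg conj (hη.K_eta_eq_zero hu)) hs

lemma eta_inv {s : ℂ} (hs : ‖s‖ = 1) : η s⁻¹ = η s := by
  rw [Complex.inv_eq_conj hs, hη.eta_conj hs]

lemma eta_one : η 1 = 1 := by
  have h := hη.eq_eta_of_K_eq_zero (z := 1) (s := 1) (by simp) (by simp) one_ne_zero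
    (by simpa using w.K_one_one)
  exact_mod_cast h.symm

lemma eta_I : η I = 0 := by
  have hneg := hη.eta_neg (s := I) (by simp)
  rw [← Complex.conj_I, hη.eta_conj (by simp)] at hneg
  linarith

lemma eta_eq_zero_iff (h11 : w.p (1, 1) = 0) {s : ℂ} (hs : ‖s‖ = 1) :
    η s = 0 ↔ s = I ∨ s = -I := by
  refine ⟨fun h0 => Complex.eq_I_or_eq_neg_I_of_re_eq_zero hs ?_, ?_⟩
  · by_contra hre
    by_cases hs1 : s = 1
    · simp [hs1, hη.eta_one] at h0
    by_cases hs1' : s = -1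
    · simp [hs1', hη.eta_neg, hη.eta_one] at h0
    obtain ⟨t, ht, ht0, hK⟩ := w.exists_real_root h11 hs hre hs1 hs1'
    have ht1 : ‖(t : ℂ)‖ ≤ 1 := by
      rw [Complex.norm_real, Real.norm_eq_abs, abs_le]; exact ⟨ht.1.le, ht.2.le⟩
    have := hη.eq_eta_of_K_eq_zero hs ht1 (by exact_mod_cast ht0) hK
    rw [h0] at this
    exact ht0 (by exact_mod_cast this)
  · rintro (rfl | rfl)
    · exact hη.eta_I
    · rw [hη.eta_neg (by simp), hη.eta_I, neg_zero]

lemma fiber_eq_pair {c : ℂ} (hc : ‖c‖ = 1) (hηc : η c ≠ 0) :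
    {s : ℂ | ‖s‖ = 1 ∧ (η s : ℂ) * s = η c * c} = {c, -c} := by
  ext s
  simp only [mem_ofPred_eq, mem_insert_iff, mem_singleton_iff]
  constructor
  · rintro ⟨hs, hsc⟩
    have habs : |η s| = |η c| := by
      simpa [hs, hc] using congrArg norm hsc
    rcases abs_eq_abs.mp habs with h | h
    · exact .inl (mul_left_cancel₀ (by exact_mod_cast hηc) (h ▸ hsc))
    · refine .inr (mul_left_cancel₀ (a := -(η c : ℂ)) (by exact_mod_cast neg_ne_zero.mpr hηc) ?_)
      have h' : (η s : ℂ) = -η c := by exact_mod_cast h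
      linear_combination hsc - s * h'
  · rintro (rfl | rfl)
    · exact ⟨hc, rfl⟩
    · refine ⟨by rwa [norm_neg], ?_⟩
      rw [hη.eta_neg hc]
      push_cast
      ring

lemma fiber_zero (h11 : w.p (1, 1) = 0) :
    {s : ℂ | ‖s‖ = 1 ∧ (η s : ℂ) * s = 0} = {I, -I} := by
  ext s
  simp only [mem_ofPred_eq, mem_insert_iff, mem_singleton_iff]
  constructor
  · rintro ⟨hs, hs0⟩
    have hs0' : s ≠ 0 := ne_zero_of_norm_ne_zero (by simp [hs])
    exact (hη.eta_eq_zero_iff h11 hs).mp (by exact_mod_cast (mul_eq_zero.mp hs0).resolve_right hs0')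
  · intro h
    have hs : ‖s‖ = 1 := by rcases h with rfl | rfl <;> simp
    exact ⟨hs, by simp [(hη.eta_eq_zero_iff h11 hs).mpr h]⟩

lemma exists_eta_mul_eq {x : ℂ} (hx : x ∈ w.S1) (hx0 : x ≠ 0) :
    ∃ c : ℂ, ‖c‖ = 1 ∧ η c ≠ 0 ∧ (η c : ℂ) * c = x := by
  obtain ⟨y, hK, hxy, hx1⟩ := hx
  have hy0 : y ≠ 0 := norm_ne_zero_iff.mp (hxy ▸ norm_ne_zero_iff.mpr hx0)
  obtain ⟨c, hc⟩ := IsAlgClosed.exists_eq_mul_self (x / y)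
  have hc1 : ‖c‖ = 1 := by
    have : ‖c‖ * ‖c‖ = 1 := by
      rw [← norm_mul, ← hc, norm_div, hxy, div_self (norm_ne_zero_iff.mpr hy0)]
    nlinarith [norm_nonneg c]
  have hc0 : c ≠ 0 := ne_zero_of_norm_ne_zero (by simp [hc1])
  have hz : x / c = η c := by
    refine hη.eq_eta_of_K_eq_zero hc1 (by simpa [hc1] using hx1) (div_ne_zero hx0 hc0) ?_
    have hy : x / c * c⁻¹ = y := by
      rw [div_mul_eq_mul_div, ← div_eq_mul_inv, div_div, ← hc, div_div_cancel₀ hx0]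
    rwa [div_mul_cancel₀ x hc0, hy]
  refine ⟨c, hc1, fun h => div_ne_zero hx0 hc0 (by simp [hz, h]), ?_⟩
  rw [← hz, div_mul_cancel₀ x hc0]

lemma ncard_fiber_S1 (h11 : w.p (1, 1) = 0) {x : ℂ} (hx : x ∈ w.S1) :
    {s : ℂ | ‖s‖ = 1 ∧ (η s : ℂ) * s = x}.ncard = 2 := by
  by_cases hx0 : x = 0
  · rw [hx0, hη.fiber_zero h11]
    exact ncard_pair fun h => I_ne_zero (self_eq_neg.mp h)
  · obtain ⟨c, hc, hηc, rfl⟩ := hη.exists_eta_mul_eq hx hx0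
    rw [hη.fiber_eq_pair hc hηc]
    exact ncard_pair fun h => ne_zero_of_norm_ne_zero (by simp [hc]) (self_eq_neg.mp h)

lemma ncard_fiber_S2 (h11 : w.p (1, 1) = 0) {y : ℂ} (hy : y ∈ w.S2) :
    {s : ℂ | ‖s‖ = 1 ∧ (η s : ℂ) * s⁻¹ = y}.ncard = 2 := by
  have hinv : {s : ℂ | ‖s‖ = 1 ∧ (η s : ℂ) * s⁻¹ = y} =
      {s : ℂ | ‖s‖ = 1 ∧ (η s : ℂ) * s = y}⁻¹ := by
    ext s
    simp only [Set.mem_inv, mem_ofPred_eq, norm_inv, inv_eq_one]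
    exact and_congr_right fun hs => by rw [hη.eta_inv hs]
  rw [hinv, ncard_inv]
  exact hη.ncard_fiber_S1 h11 (w.S2_subset_S1 hy)

end IsDistinguishedRoot

end QuadrantWalk

/-- case `p_{1,1} = 0`. Here `η(s)` is the distinguished root in the
closed unit disk of `K(ηs, ηs⁻¹) = 0` (characterized by: the solution set in the
closed disk is exactly `{0, η(s)}` and `η(s) ∈ [-1,1]` is real). Then `0 ∈ S₁`,
`η(-conj s) = -η(s)`, and the maps `s ↦ η(s)s`, `s ↦ η(s)s⁻¹` are exactly two-to-one
from the unit circle onto `S₁`, resp. `S₂`. -/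
theorem statement2 (w : QuadrantWalk) (h11 : w.p (1, 1) = 0)
    (η : ℂ → ℝ)
    (hη : ∀ s : ℂ, ‖s‖ = 1 →
      η s ∈ Set.Icc (-1 : ℝ) 1 ∧
      (∀ z : ℂ, ‖z‖ ≤ 1 →
        (w.K (z * s) (z * s⁻¹) = 0 ↔ z = 0 ∨ z = (η s : ℂ)))) :
    (0 : ℂ) ∈ w.S1 ∧
    (∀ s : ℂ, ‖s‖ = 1 → η (-(starRingEnd ℂ s)) = - η s) ∧
    (∀ s : ℂ, ‖s‖ = 1 → (η s : ℂ) * s ∈ w.S1 ∧ (η s : ℂ) * s⁻¹ ∈ w.S2) ∧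
    (∀ x ∈ w.S1, ({s : ℂ | ‖s‖ = 1 ∧ (η s : ℂ) * s = x}).ncard = 2) ∧
    (∀ y ∈ w.S2, ({s : ℂ | ‖s‖ = 1 ∧ (η s : ℂ) * s⁻¹ = y}).ncard = 2) := by
  have hη : w.IsDistinguishedRoot η := hη
  refine ⟨?_, fun s hs => ?_, fun s hs => ⟨hη.eta_mul_mem_S1 hs, hη.eta_mul_inv_mem_S2 hs⟩,
    fun x hx => hη.ncard_fiber_S1 h11 hx, fun y hy => hη.ncard_fiber_S2 h11 hy⟩
  · exact ⟨0, by simpa using ((hη 1 (by simp)).2 0 (by simp)).mpr (.inl rfl), by simp, by simp⟩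
  · rw [hη.eta_neg (by rwa [Complex.norm_conj]), hη.eta_conj hs]
end
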